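/- Let I be a finite index set. For each i ∈ I, let H_i be a real symmetric n_i × n_i matrix and P_i an arbitrary real n_i × n matrix. Set H := Σ_i P_iᵀ H_i P_i and |H_e| := Σ_i P_iᵀ |H_i| P_i, where |H_i| is the absolute-value spectral projection of H_i. Then for every weight w with 1/2 ≤ w ≤ 1, the matrix (1 - w) H + w |H_e| is positive semidefinite. -/

import Mathlib

open Matrix

/-- Spectral map: apply `f` to the eigenvalues of a real symmetric matrix,
given an orthonormal eigendecomposition `A = U * diagonal λ * Uᴴ`. -/
noncomputable def specMap {m : Type*} [Fintype m] [DecidableEq m]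
    (A : Matrix m m ℝ) (hA : A.IsHermitian) (f : ℝ → ℝ) : Matrix m m ℝ :=
  (hA.eigenvectorUnitary : Matrix m m ℝ) * Matrix.diagonal (f ∘ hA.eigenvalues) *
    star (hA.eigenvectorUnitary : Matrix m m ℝ)

/-- Absolute-value spectral projection `|A| = Σ_k |λ_k| e_k e_kᵀ`. -/
noncomputable def absProj {m : Type*} [Fintype m] [DecidableEq m]
    (A : Matrix m m ℝ) (hA : A.IsHermitian) : Matrix m m ℝ :=
  specMap A hA (fun t => |t|)

/-- Clamped spectral projection `A⁺ = Σ_k max(λ_k, 0) e_k e_kᵀ`. -/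
noncomputable def clampProj {m : Type*} [Fintype m] [DecidableEq m]
    (A : Matrix m m ℝ) (hA : A.IsHermitian) : Matrix m m ℝ :=
  specMap A hA (fun t => max t 0)

/-! On the eigenvalues of `H_i`, the matrix `(1 - w) H_i + w |H_i|` acts by
`λ ↦ (1 - w) λ + w |λ|`, which is `λ ≥ 0` for `λ ≥ 0` and `(1 - 2w) λ ≥ 0` for `λ < 0` once
`w ≥ 1/2`. Hence each summand is positive semidefinite, and so is every congruence
`P_iᵀ (·) P_i` of it and their sum. -/

section SpectralMap

variable {m : Type*} [Fintype m] [DecidableEq m] {A : Matrix m m ℝ} (hA : A.IsHermitian)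

theorem specMap_id : specMap A hA id = A := by
  conv_rhs => rw [hA.spectral_theorem]
  rfl

theorem specMap_add (f g : ℝ → ℝ) :
    specMap A hA f + specMap A hA g = specMap A hA (f + g) := by
  simp only [specMap, ← Matrix.add_mul, ← Matrix.mul_add, Matrix.diagonal_add]
  rfl

theorem smul_specMap (c : ℝ) (f : ℝ → ℝ) : c • specMap A hA f = specMap A hA (c • f) := by
  rw [specMap, specMap, show (c • f) ∘ hA.eigenvalues = c • (f ∘ hA.eigenvalues) from rfl,
    Matrix.diagonal_smul, Matrix.mul_smul, Matrix.smul_mul]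

theorem posSemidef_specMap {f : ℝ → ℝ} (hf : ∀ k, 0 ≤ f (hA.eigenvalues k)) :
    (specMap A hA f).PosSemidef := by
  have hd : (Matrix.diagonal (f ∘ hA.eigenvalues)).PosSemidef :=
    Matrix.posSemidef_diagonal_iff.mpr hf
  exact hd.mul_mul_conjTranspose_same _

theorem smul_add_smul_absProj (a b : ℝ) :
    a • A + b • absProj A hA = specMap A hA (fun t => a * t + b * |t|) := by
  conv_lhs => arg 1; rw [← specMap_id hA]
  rw [absProj, smul_specMap, smul_specMap, specMap_add]
  rfl

end SpectralMap

theorem mul_add_mul_abs_nonneg {w : ℝ} (hw : 1 / 2 ≤ w) (t : ℝ) : 0 ≤ (1 - w) * t + w * |t| := by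
  rcases le_total 0 t with ht | ht
  · rw [abs_of_nonneg ht]; linarith
  · rw [abs_of_nonpos ht]; nlinarith

theorem posSemidef_smul_add_smul_absProj {m : Type*} [Fintype m] [DecidableEq m]
    {A : Matrix m m ℝ} (hA : A.IsHermitian) {w : ℝ} (hw : 1 / 2 ≤ w) :
    ((1 - w) • A + w • absProj A hA).PosSemidef := by
  rw [smul_add_smul_absProj]
  exact posSemidef_specMap hA fun k => mul_add_mul_abs_nonneg hw _

theorem smul_sum_add_smul_sum_transpose_mul_mul {ι R : Type*} [Fintype ι] [CommSemiring R]
    {m : ι → Type*} [∀ i, Fintype (m i)] {N : Type*}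
    (P : ∀ i, Matrix (m i) N R) (A B : ∀ i, Matrix (m i) (m i) R) (a b : R) :
    a • ∑ i, (P i)ᵀ * A i * P i + b • ∑ i, (P i)ᵀ * B i * P i
      = ∑ i, (P i)ᵀ * (a • A i + b • B i) * P i := by
  simp only [Finset.smul_sum, ← Finset.sum_add_distrib, Matrix.mul_add, Matrix.add_mul,
    Matrix.mul_smul, Matrix.smul_mul]

theorem posSemidef_sum_transpose_mul_mul {ι : Type*} [Fintype ι]
    {m : ι → Type*} [∀ i, Fintype (m i)] {N : Type*} [Fintype N]
    (P : ∀ i, Matrix (m i) N ℝ) {A : ∀ i, Matrix (m i) (m i) ℝ}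
    (hA : ∀ i, (A i).PosSemidef) : (∑ i, (P i)ᵀ * A i * P i).PosSemidef :=
  Matrix.posSemidef_sum _ fun i _ => by
    simpa only [Matrix.conjTranspose_eq_transpose_of_trivial] using
      (hA i).conjTranspose_mul_mul_same (P i)

theorem interpolated_matrix_posSemidef_general
    {ι : Type*} [Fintype ι] {N : ℕ} (n : ι → ℕ)
    (H : ∀ i, Matrix (Fin (n i)) (Fin (n i)) ℝ)
    (hH : ∀ i, (H i).IsHermitian)
    (P : ∀ i, Matrix (Fin (n i)) (Fin N) ℝ)
    (w : ℝ) (hw₁ : 1 / 2 ≤ w) :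
    ((1 - w) • (∑ i, (P i)ᵀ * H i * P i)
      + w • (∑ i, (P i)ᵀ * absProj (H i) (hH i) * P i)).PosSemidef := by
  rw [smul_sum_add_smul_sum_transpose_mul_mul]
  exact posSemidef_sum_transpose_mul_mul P fun i => posSemidef_smul_add_smul_absProj (hH i) hw₁

/-- For `1/2 ≤ w ≤ 1`, the interpolated matrix `(1-w) H + w |H_e|` is
positive semidefinite. -/
theorem interpolated_matrix_posSemidef
    {ι : Type*} [Fintype ι] {N : ℕ} (n : ι → ℕ)
    (H : ∀ i, Matrix (Fin (n i)) (Fin (n i)) ℝ)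
    (hH : ∀ i, (H i).IsHermitian)
    (P : ∀ i, Matrix (Fin (n i)) (Fin N) ℝ)
    (w : ℝ) (hw₁ : 1 / 2 ≤ w) (hw₂ : w ≤ 1) :
    ((1 - w) • (∑ i, (P i)ᵀ * H i * P i)
      + w • (∑ i, (P i)ᵀ * absProj (H i) (hH i) * P i)).PosSemidef :=
  interpolated_matrix_posSemidef_general n H hH P w hw₁
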